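/- Let A be a unital JB-algebra (e.g., the selfadjoint part of a unital C*-algebra). For a, b ∈ A, lim_{n→∞} n·d_T(exp(a/n), exp(b/n)) = ‖a - b‖. -/

import Mathlib

noncomputable section

variable {A : Type*} [CStarAlgebra A] [PartialOrder A] [StarOrderedRing A]

/-- `M(a/b) = inf {l > 0 : a ≤ l b}`. -/
def Mrel (a b : A) : ℝ := sInf {l : ℝ | 0 < l ∧ a ≤ l • b}

/-- Thompson's metric. -/
def dT (a b : A) : ℝ := Real.log (max (Mrel a b) (Mrel b a))

/-- Hilbert's metric. -/
def dH (a b : A) : ℝ := Real.log (Mrel a b * Mrel b a)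

/-- The variation seminorm `max σ(a) - min σ(a)`. -/
def vnorm (a : A) : ℝ := sSup (spectrum ℝ a) - sInf (spectrum ℝ a)

/-!
Conjugating by `exp (-(t/2) b)` gives `M(exp (t a) / exp (t b)) = ‖F t‖` with
`F t = exp (-(t/2) b) * exp (t a) * exp (-(t/2) b)`. Now `F` and `t ↦ exp (t (a - b))` agree
with their derivatives at `t = 0`, so they differ by `o(t)`, and so do the logarithms of their
norms. As `log ‖exp (t (a - b))‖ = t · max σ(a - b)`, this gives
`t⁻¹ log M(exp (t a) / exp (t b)) → max σ(a - b)` as `t → 0⁺`, and the maximum of this limit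
with the one for `(b, a)` is `‖a - b‖`.
-/

open NormedSpace Filter Topology Asymptotics

theorem isLittleO_exp_smul_mul_exp_smul_mul_exp_smul_sub {B : Type*} [NormedRing B]
    [NormedAlgebra ℝ B] [CompleteSpace B] (u v w : B) :
    (fun t : ℝ => exp (t • u) * exp (t • v) * exp (t • w) - exp (t • (u + v + w)))
      =o[𝓝 0] id := by
  have hF : HasDerivAt (fun t : ℝ => exp (t • u) * exp (t • v) * exp (t • w)) (u + v + w) 0 := by
    convert ((hasDerivAt_exp_smul_const u (0 : ℝ)).mul
      (hasDerivAt_exp_smul_const v 0)).mul (hasDerivAt_exp_smul_const w 0) using 1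
    · rfl
    · simp
  have hG : HasDerivAt (fun t : ℝ => exp (t • (u + v + w))) (u + v + w) 0 := by
    simpa using hasDerivAt_exp_smul_const (u + v + w) (0 : ℝ)
  refine (hF.sub hG).isLittleO.congr (fun t => ?_) sub_zero
  simp

theorem abs_log_sub_log_le {x y : ℝ} (hx : 0 < x) (hy : 0 < y) :
    |Real.log x - Real.log y| ≤ |x - y| / min x y := by
  rw [abs_sub_le_iff, ← Real.log_div hx.ne' hy.ne', ← Real.log_div hy.ne' hx.ne']
  constructor
  · calc Real.log (x / y) ≤ x / y - 1 := Real.log_le_sub_one_of_pos (div_pos hx hy)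
      _ = (x - y) / y := by field_simp
      _ ≤ |x - y| / min x y := by gcongr; exacts [le_abs_self _, min_le_right _ _]
  · calc Real.log (y / x) ≤ y / x - 1 := Real.log_le_sub_one_of_pos (div_pos hy hx)
      _ = (y - x) / x := by field_simp
      _ ≤ |x - y| / min x y := by gcongr; exacts [neg_sub x y ▸ neg_le_abs _, min_le_left _ _]

theorem isLittleO_log_sub_log {α : Type*} {l : Filter α} {f g k : α → ℝ}
    (hf : Tendsto f l (𝓝 1)) (hg : Tendsto g l (𝓝 1))
    (hfg : (fun x => f x - g x) =o[l] k) :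
    (fun x => Real.log (f x) - Real.log (g x)) =o[l] k := by
  have hhalf : ∀ᶠ x in l, 2⁻¹ ≤ f x ∧ 2⁻¹ ≤ g x :=
    (hf.eventually (Ici_mem_nhds (by norm_num))).and (hg.eventually (Ici_mem_nhds (by norm_num)))
  refine (IsBigO.of_bound 2 ?_).trans_isLittleO hfg
  filter_upwards [hhalf] with x ⟨hfx, hgx⟩
  have hmin : 2⁻¹ ≤ min (f x) (g x) := le_min hfx hgx
  calc ‖Real.log (f x) - Real.log (g x)‖ ≤ |f x - g x| / min (f x) (g x) :=
        abs_log_sub_log_le (by linarith) (by linarith)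
    _ ≤ |f x - g x| / 2⁻¹ := by gcongr
    _ = 2 * ‖f x - g x‖ := by rw [Real.norm_eq_abs]; field_simp

theorem IsSelfAdjoint.conjugate_le_conjugate_iff {R : Type*} [Ring R] [PartialOrder R]
    [StarRing R] [StarOrderedRing R] {c x y : R} (hc : IsSelfAdjoint c) (hu : IsUnit c) :
    c * x * c ≤ c * y * c ↔ x ≤ y := by
  have h := hu.star_right_conjugate_nonneg_iff (x := y - x)
  rwa [hc.star_eq, mul_sub, sub_mul, sub_nonneg, sub_nonneg] at h

section Spectrum

variable {C : Type*} [CStarAlgebra C] [Nontrivial C]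

theorem norm_exp_eq_exp_sSup_spectrum {x : C} (hx : IsSelfAdjoint x) :
    ‖exp x‖ = Real.exp (sSup (spectrum ℝ x)) := by
  have hmax : IsGreatest (spectrum ℝ x) (sSup (spectrum ℝ x)) :=
    (spectrum.isCompact x).isGreatest_sSup (ContinuousFunctionalCalculus.spectrum_nonempty x hx)
  rw [← CFC.real_exp_eq_normedSpace_exp hx]
  refine (IsGreatest.norm_cfc Real.exp x (by fun_prop) hx).unique ?_
  simpa [Real.abs_exp] using (Real.exp_monotone.monotoneOn _).map_isGreatest hmax

theorem log_norm_exp_smul {x : C} (hx : IsSelfAdjoint x) {t : ℝ} (ht : 0 ≤ t) :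
    Real.log ‖exp (t • x)‖ = t * sSup (spectrum ℝ x) := by
  rw [norm_exp_eq_exp_sSup_spectrum ((IsSelfAdjoint.all t).smul hx), Real.log_exp,
    spectrum.smul_eq_smul t x (ContinuousFunctionalCalculus.spectrum_nonempty x hx),
    Real.sSup_smul_of_nonneg ht, smul_eq_mul]

theorem norm_eq_max_sSup_spectrum {x : C} (hx : IsSelfAdjoint x) :
    ‖x‖ = max (sSup (spectrum ℝ x)) (sSup (spectrum ℝ (-x))) := by
  have hle (z : C) : sSup (spectrum ℝ z) ≤ ‖z‖ :=
    Real.sSup_le (fun r hr => (le_abs_self r).trans (spectrum.norm_le_norm_of_mem hr))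
      (norm_nonneg z)
  refine le_antisymm ?_ (max_le (hle x) (norm_neg x ▸ hle (-x)))
  rcases CStarAlgebra.norm_or_neg_norm_mem_spectrum hx with h | h
  · exact le_max_of_le_left (le_csSup (spectrum.isCompact x).bddAbove h)
  · refine le_max_of_le_right (le_csSup (spectrum.isCompact (-x)).bddAbove ?_)
    rw [← spectrum.neg_eq]
    exact Set.mem_neg.2 h

end Spectrum

theorem Mrel_conjugate {c : A} (hc : IsSelfAdjoint c) (hu : IsUnit c) (x y : A) :
    Mrel (c * x * c) (c * y * c) = Mrel x y := by
  have hsmul (l : ℝ) : l • (c * y * c) = c * (l • y) * c := by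
    rw [mul_smul_comm, smul_mul_assoc]
  simp only [Mrel, hsmul, hc.conjugate_le_conjugate_iff hu]

theorem Mrel_one_right {x : A} (hx : 0 ≤ x) (hx₀ : x ≠ 0) : Mrel x 1 = ‖x‖ := by
  have hset : {l : ℝ | 0 < l ∧ x ≤ l • (1 : A)} = Set.Ici ‖x‖ := by
    ext l
    refine ⟨fun ⟨hl, hle⟩ => ?_, fun hl => ?_⟩
    · rwa [Set.mem_Ici, CStarAlgebra.norm_le_iff_le_algebraMap x hl.le,
        Algebra.algebraMap_eq_smul_one]
    · have hl₀ : 0 < l := (norm_pos_iff.mpr hx₀).trans_le hl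
      rw [Set.mem_Ici, CStarAlgebra.norm_le_iff_le_algebraMap x hl₀.le,
        Algebra.algebraMap_eq_smul_one] at hl
      exact ⟨hl₀, hl⟩
  rw [Mrel, hset, csInf_Ici]

section Exp

-- `exp` does not depend on the `ℚ`-algebra structure; this one only unlocks the API stated
-- for `[NormedAlgebra ℚ B]` (`exp_add_of_commute`, `isUnit_exp`, `exp_continuous`).
local instance {B : Type*} [NormedRing B] [NormedAlgebra ℝ B] : NormedAlgebra ℚ B :=
  NormedAlgebra.restrictScalars ℚ ℝ B

theorem Mrel_exp_exp [Nontrivial A] {x y : A} (hx : IsSelfAdjoint x) (hy : IsSelfAdjoint y) :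
    Mrel (exp x) (exp y) = ‖exp (-(2⁻¹ : ℝ) • y) * exp x * exp (-(2⁻¹ : ℝ) • y)‖ := by
  set c := exp (-(2⁻¹ : ℝ) • y)
  have hc : IsSelfAdjoint c := ((IsSelfAdjoint.all _).smul hy).exp
  have hcu : IsUnit c := isUnit_exp _
  have hcyc : c * exp y * c = 1 := by
    have hadd (s t : ℝ) : exp (s • y) * exp (t • y) = exp ((s + t) • y) := by
      rw [add_smul, exp_add_of_commute (((Commute.refl y).smul_left s).smul_right t)]
    have h1 : exp y = exp ((1 : ℝ) • y) := by rw [one_smul]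
    rw [h1, hadd, hadd]
    norm_num
  rw [← Mrel_conjugate hc hcu, hcyc,
    Mrel_one_right (IsSelfAdjoint.conjugate_nonneg hx.exp_nonneg hc)
      ((hcu.mul (isUnit_exp x)).mul hcu).ne_zero]

theorem Mrel_exp_exp_pos [Nontrivial A] {x y : A} (hx : IsSelfAdjoint x) (hy : IsSelfAdjoint y) :
    0 < Mrel (exp x) (exp y) := by
  rw [Mrel_exp_exp hx hy]
  exact norm_pos_iff.mpr (((isUnit_exp _).mul (isUnit_exp x)).mul (isUnit_exp _)).ne_zero

theorem tendsto_inv_mul_log_Mrel_exp_smul [Nontrivial A] {a b : A} (ha : IsSelfAdjoint a)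
    (hb : IsSelfAdjoint b) :
    Tendsto (fun t : ℝ => t⁻¹ * Real.log (Mrel (exp (t • a)) (exp (t • b)))) (𝓝[>] 0)
      (𝓝 (sSup (spectrum ℝ (a - b)))) := by
  set u : A := -(2⁻¹ : ℝ) • b
  set F : ℝ → A := fun t => exp (t • u) * exp (t • a) * exp (t • u)
  set G : ℝ → A := fun t => exp (t • (u + a + u))
  have hM (t : ℝ) : Mrel (exp (t • a)) (exp (t • b)) = ‖F t‖ := by
    rw [Mrel_exp_exp ((IsSelfAdjoint.all t).smul ha) ((IsSelfAdjoint.all t).smul hb), smul_comm]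
  have hG {t : ℝ} (ht : 0 ≤ t) : Real.log ‖G t‖ = t * sSup (spectrum ℝ (a - b)) := by
    have hsum : u + a + u = a - b := by simp only [u]; module
    simp only [G, hsum, log_norm_exp_smul (ha.sub hb) ht]
  have hF1 : Tendsto (fun t => ‖F t‖) (𝓝 0) (𝓝 1) := by
    simpa [F] using (show Continuous F by fun_prop).norm.tendsto 0
  have hG1 : Tendsto (fun t => ‖G t‖) (𝓝 0) (𝓝 1) := by
    simpa [G] using (show Continuous G by fun_prop).norm.tendsto 0
  have hlog : (fun t => Real.log ‖F t‖ - Real.log ‖G t‖) =o[𝓝 0] id :=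
    isLittleO_log_sub_log hF1 hG1 <| (isBigO_of_le _ fun t =>
      (Real.norm_eq_abs _).trans_le (abs_norm_sub_norm_le (F t) (G t))).trans_isLittleO
        (isLittleO_exp_smul_mul_exp_smul_mul_exp_smul_sub u a u)
  have h := ((hlog.mono (nhdsWithin_le_nhds (s := Set.Ioi 0))).tendsto_div_nhds_zero).add_const
    (sSup (spectrum ℝ (a - b)))
  rw [zero_add] at h
  refine h.congr' ?_
  filter_upwards [self_mem_nhdsWithin] with t (ht : 0 < t)
  rw [hM, hG ht.le, id]
  field_simp
  ring

theorem tendsto_inv_mul_dT_exp_smul {a b : A} (ha : IsSelfAdjoint a) (hb : IsSelfAdjoint b) :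
    Tendsto (fun t : ℝ => t⁻¹ * dT (exp (t • a)) (exp (t • b))) (𝓝[>] 0) (𝓝 ‖a - b‖) := by
  rcases subsingleton_or_nontrivial A with _ | _
  · have hM (x y : A) : Mrel x y = 0 := by
      have hset : {l : ℝ | 0 < l ∧ x ≤ l • y} = Set.Ioi 0 :=
        Set.ext fun l => and_iff_left (Subsingleton.elim x _).le
      rw [Mrel, hset, csInf_Ioi]
    simp [dT, hM, Subsingleton.elim a b]
  rw [norm_eq_max_sSup_spectrum (ha.sub hb), neg_sub]
  refine ((tendsto_inv_mul_log_Mrel_exp_smul ha hb).max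
    (tendsto_inv_mul_log_Mrel_exp_smul hb ha)).congr' ?_
  filter_upwards [self_mem_nhdsWithin] with t (ht : 0 < t)
  have hta := (IsSelfAdjoint.all t).smul ha
  have htb := (IsSelfAdjoint.all t).smul hb
  rw [dT, Real.strictMonoOn_log.monotoneOn.map_max (Mrel_exp_exp_pos hta htb)
    (Mrel_exp_exp_pos htb hta), mul_max_of_nonneg _ _ (inv_nonneg.2 ht.le)]

end Exp

/-- `n d_T(exp(a/n), exp(b/n)) → ‖a - b‖`. -/
theorem stmt7 (a b : A) (ha : IsSelfAdjoint a) (hb : IsSelfAdjoint b) :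
    Filter.Tendsto
      (fun n : ℕ => (n : ℝ) * dT (cfc Real.exp ((n : ℝ)⁻¹ • a)) (cfc Real.exp ((n : ℝ)⁻¹ • b)))
      Filter.atTop (nhds ‖a - b‖) := by
  have hn : Tendsto (fun n : ℕ => (n : ℝ)⁻¹) atTop (𝓝[>] 0) :=
    tendsto_inv_atTop_nhdsGT_zero.comp tendsto_natCast_atTop_atTop
  refine ((tendsto_inv_mul_dT_exp_smul ha hb).comp hn).congr fun n => ?_
  simp only [Function.comp_apply, inv_inv,
    CFC.real_exp_eq_normedSpace_exp ((IsSelfAdjoint.all _).smul ha),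
    CFC.real_exp_eq_normedSpace_exp ((IsSelfAdjoint.all _).smul hb)]
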